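/- arXiv:1701.06698 — 4 statements merged into one kernel-verified Lean document; each statement's English description precedes it below -/
import Mathlib

section
/- Let U be an additive subgroup of ℝ, φ : ℝ → ℝ with φ|_U subadditive, g sublinear with φ ≤ g. Then the fill-in φ_fill(r) := inf_{u ∈ U} (φ(u) + g(r - u)) satisfies φ_fill(u) = φ(u) for every u ∈ U. -/
theorem stmt_5 (U : AddSubgroup ℝ) (φ g : ℝ → ℝ)
    (hφsub : ∀ u₁ ∈ U, ∀ u₂ ∈ U, φ (u₁ + u₂) ≤ φ u₁ + φ u₂)
    (hgsub : ∀ x y, g (x + y) ≤ g x + g y)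
    (hghom : ∀ l : ℝ, 0 ≤ l → ∀ x, g (l * x) = l * g x)
    (hle : ∀ x, φ x ≤ g x)
    (hbdd : ∀ r : ℝ, BddBelow ((fun u : ℝ => φ u + g (r - u)) '' U)) :
    ∀ u ∈ U, sInf ((fun v : ℝ => φ v + g (u - v)) '' U) = φ u := by
  intro u hu
  have hg0 : g 0 = 0 := by
    have := hghom 0 le_rfl 0
    simpa using this
  apply le_antisymm
  · have : φ u + g (u - u) ∈ ((fun v : ℝ => φ v + g (u - v)) '' U) :=
      ⟨u, hu, rfl⟩
    have h := csInf_le (hbdd u) this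
    simpa [hg0] using h
  · refine le_csInf ⟨_, Set.mem_image_of_mem _ hu⟩ ?_
    rintro b ⟨v, hv, rfl⟩
    have huv : u - v ∈ U := sub_mem hu hv
    have h1 : φ u ≤ φ v + φ (u - v) := by
      have := hφsub v hv (u - v) huv
      simpa using this
    have h2 : φ (u - v) ≤ g (u - v) := hle _
    dsimp only
    linarith
end

section
/- Let b ∈ (0,1), δ ∈ (0, min(b/2, (1-b)/2)), and let π_δ be the 1-periodic piecewise linear function defined on [0,1] by: π_δ(r) = r/(2δ) on [0,δ], 1/2 on (δ, b-δ], 1 - (b-r)/(2δ) on (b-δ, b], 1 + (b-r)/(2δ) on (b, b+δ], 1/2 on (b+δ, 1-δ], 1/2 + (1-δ-r)/(2δ) on (1-δ, 1]. Then π_δ is subadditive: π_δ(x+y) ≤ π_δ(x) + π_δ(y) for all x, y ∈ ℝ. -/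
/-!
Up to integer translations, a point `y` is either within `δ` of `ℤ`, where `π_δ y = |t| / (2δ)` for
its offset `t` from the nearest integer, or else `π_δ y ≥ 1/2`. The function `π_δ` is continuous,
piecewise linear with slopes `0` and `±1/(2δ)`, hence `1/(2δ)`-Lipschitz; so in the first case
`π_δ (x + y) = π_δ (x + t) ≤ π_δ x + |t| / (2δ) = π_δ x + π_δ y`. If both `π_δ x, π_δ y ≥ 1/2`,
subadditivity follows from `π_δ ≤ 1`.
-/

open Set Function
open scoped NNReal


namespace Function.Periodic

variable {E : Type*} [PseudoMetricSpace E]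

theorem apply_eq_apply_fract_of_eqOn_Ico {α : Type*} {f g : ℝ → α} (hf : Periodic f 1)
    (hfg : EqOn f g (Ico 0 1)) (x : ℝ) : f x = g (Int.fract x) := by
  rw [← hfg ⟨Int.fract_nonneg x, Int.fract_lt_one x⟩, Int.fract, ← mul_one (⌊x⌋ : ℝ),
    hf.sub_int_mul_eq]

theorem dist_le_of_lipschitzOnWith_Icc {f : ℝ → E} {c : ℝ} {K : ℝ≥0} (hf : Periodic f c)
    (hc : 0 < c) (hK : LipschitzOnWith K f (Icc 0 c)) {x y : ℝ} (hx₀ : 0 ≤ x) (hxc : x ≤ c)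
    (hxy : x ≤ y) (hyx : y ≤ x + c) : dist (f x) (f y) ≤ K * (y - x) := by
  have hx : x ∈ Icc 0 c := ⟨hx₀, hxc⟩
  rcases le_or_gt y c with hyc | hcy
  · simpa [Real.dist_eq, abs_of_nonpos (sub_nonpos.2 hxy)] using
      hK.dist_le_mul x hx y ⟨hx₀.trans hxy, hyc⟩
  -- go through `c`, using `f c = f 0` and `f y = f (y - c)`
  have hxc' := hK.dist_le_mul x hx c ⟨hc.le, le_rfl⟩
  have hcy' := hK.dist_le_mul 0 ⟨le_rfl, hc.le⟩ (y - c) ⟨by linarith, by linarith⟩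
  rw [hf.sub_eq, ← hf 0, zero_add, Real.dist_eq, abs_of_nonpos (by linarith)] at hcy'
  rw [Real.dist_eq, abs_of_nonpos (by linarith)] at hxc'
  calc dist (f x) (f y) ≤ dist (f x) (f c) + dist (f c) (f y) := dist_triangle _ _ _
    _ ≤ K * (c - x) + K * (y - c) := by linarith
    _ = K * (y - x) := by ring

theorem lipschitzWith_of_lipschitzOnWith_Icc {f : ℝ → E} {c : ℝ} {K : ℝ≥0} (hf : Periodic f c)
    (hc : 0 < c) (hK : LipschitzOnWith K f (Icc 0 c)) : LipschitzWith K f := by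
  refine LipschitzWith.of_dist_le_mul fun x y => ?_
  wlog hxy : x ≤ y generalizing x y
  · rw [dist_comm, dist_comm x]
    exact this y x (le_of_not_ge hxy)
  -- translate `x` into `[0, c)` and then `y` into `[x, x + c)`
  obtain ⟨hx₀, hxc⟩ := toIcoMod_mem_Ico' hc x
  obtain ⟨hd₀, hdc⟩ := toIcoMod_mem_Ico' hc (y - x)
  have hm : 0 ≤ toIcoDiv hc 0 (y - x) := by
    rw [toIcoDiv_eq_floor, sub_zero]
    exact Int.floor_nonneg.2 (div_nonneg (sub_nonneg.2 hxy) hc.le)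
  have key := hf.dist_le_of_lipschitzOnWith_Icc hc hK hx₀ hxc.le (le_add_of_nonneg_right hd₀)
    (by linarith)
  rw [add_sub_cancel_left, toIcoMod, toIcoMod,
    show ∀ n m : ℤ, x - n • c + (y - x - m • c) = y - (n + m) • c by intro n m; rw [add_zsmul]; ring,
    hf.sub_zsmul_eq, hf.sub_zsmul_eq] at key
  calc dist (f x) (f y) ≤ K * toIcoMod hc 0 (y - x) := key
    _ ≤ K * dist x y := by
      gcongr
      rw [toIcoMod, Real.dist_eq, abs_of_nonpos (by linarith)]
      linarith [zsmul_nonneg hc.le hm]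

theorem map_add_add_intCast_le {f : ℝ → ℝ} {K : ℝ≥0} (hf : Periodic f 1) (hK : LipschitzWith K f)
    (x t : ℝ) (n : ℤ) : f (x + (t + n)) ≤ f x + K * |t| := by
  rw [← add_assoc, ← mul_one (n : ℝ), hf.int_mul n]
  have := hK.dist_le_mul (x + t) x
  rw [Real.dist_eq, Real.dist_eq, add_sub_cancel_left] at this
  linarith [le_abs_self (f (x + t) - f x)]

end Function.Periodic

noncomputable def piDelta (b δ r : ℝ) : ℝ :=
  if r ≤ δ then r / (2 * δ)
  else if r ≤ b - δ then 1 / 2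
  else if r ≤ b then 1 - (b - r) / (2 * δ)
  else if r ≤ b + δ then 1 + (b - r) / (2 * δ)
  else if r ≤ 1 - δ then 1 / 2
  else 1 / 2 + (1 - δ - r) / (2 * δ)

variable {b δ r : ℝ}

theorem piDelta_of_le (h : r ≤ δ) : piDelta b δ r = r / (2 * δ) := if_pos h

theorem piDelta_of_one_sub_lt (hδ : 0 < δ) (hδb : 2 * δ ≤ b) (hbδ : b + 2 * δ ≤ 1) (h : 1 - δ < r) :
    piDelta b δ r = (1 - r) / (2 * δ) := by
  rw [piDelta, if_neg (by linarith), if_neg (by linarith), if_neg (by linarith),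
    if_neg (by linarith), if_neg (by linarith)]
  field_simp
  ring

theorem half_le_piDelta (hδ : 0 < δ) (h₁ : δ < r) (h₂ : r ≤ 1 - δ) : 1 / 2 ≤ piDelta b δ r := by
  rw [piDelta, if_neg h₁.not_ge]
  split_ifs <;> rw [← sub_nonneg] <;> field_simp <;> linarith

theorem piDelta_le_one (hδ : 0 < δ) (r : ℝ) : piDelta b δ r ≤ 1 := by
  unfold piDelta
  split_ifs <;> rw [← sub_nonneg] <;> field_simp <;> linarith

theorem abs_piDelta_sub_le (hδ : 0 < δ) (hδb : 2 * δ ≤ b) (hbδ : b + 2 * δ ≤ 1) {u v : ℝ}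
    (huv : u ≤ v) : |piDelta b δ v - piDelta b δ u| ≤ (v - u) / (2 * δ) := by
  rw [abs_sub_le_iff, le_div_iff₀ (by positivity), le_div_iff₀ (by positivity)]
  unfold piDelta
  split_ifs <;> constructor <;> field_simp <;> linarith

theorem lipschitzWith_piDelta (hδ : 0 < δ) (hδb : 2 * δ ≤ b) (hbδ : b + 2 * δ ≤ 1) :
    LipschitzWith (Real.toNNReal (2 * δ)⁻¹) (piDelta b δ) := by
  refine LipschitzWith.of_dist_le_mul fun u v => ?_
  wlog huv : u ≤ v generalizing u v
  · rw [dist_comm, dist_comm u]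
    exact this v u (le_of_not_ge huv)
  rw [Real.dist_eq, Real.dist_eq, abs_sub_comm, abs_sub_comm u, abs_of_nonneg (sub_nonneg.2 huv),
    Real.coe_toNNReal _ (by positivity), inv_mul_eq_div]
  exact abs_piDelta_sub_le hδ hδb hbδ huv

theorem half_le_piDelta_fract_or_eq_mul_abs (hδ : 0 < δ) (hδb : 2 * δ ≤ b) (hbδ : b + 2 * δ ≤ 1)
    (x : ℝ) : 1 / 2 ≤ piDelta b δ (Int.fract x) ∨
      ∃ (t : ℝ) (n : ℤ), x = t + n ∧ piDelta b δ (Int.fract x) = (2 * δ)⁻¹ * |t| := by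
  have h₀ := Int.fract_nonneg x
  have h₁ := Int.fract_lt_one x
  rcases le_or_gt (Int.fract x) δ with hl | hl
  · refine Or.inr ⟨Int.fract x, ⌊x⌋, (Int.fract_add_floor x).symm, ?_⟩
    rw [piDelta_of_le hl, abs_of_nonneg h₀, inv_mul_eq_div]
  rcases le_or_gt (Int.fract x) (1 - δ) with hr | hr
  · exact Or.inl (half_le_piDelta hδ hl hr)
  · refine Or.inr ⟨Int.fract x - 1, ⌊x⌋ + 1, by push_cast; linarith [Int.fract_add_floor x], ?_⟩
    rw [piDelta_of_one_sub_lt hδ hδb hbδ hr, abs_of_neg (by linarith), inv_mul_eq_div, neg_sub]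


theorem stmt_7_general (b δ : ℝ) (hδ : δ ∈ Set.Ioo (0:ℝ) (min (b / 2) ((1 - b) / 2)))
    (π : ℝ → ℝ)
    (hper : ∀ x : ℝ, π (x + 1) = π x)
    (hdef : ∀ r : ℝ, 0 ≤ r → r ≤ 1 →
      π r = if r ≤ δ then r / (2 * δ)
        else if r ≤ b - δ then 1 / 2
        else if r ≤ b then 1 - (b - r) / (2 * δ)
        else if r ≤ b + δ then 1 + (b - r) / (2 * δ)
        else if r ≤ 1 - δ then 1 / 2
        else 1 / 2 + (1 - δ - r) / (2 * δ)) :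
    ∀ x y : ℝ, π (x + y) ≤ π x + π y := by
  obtain ⟨hδ0, hδb, hbδ⟩ : 0 < δ ∧ 2 * δ ≤ b ∧ b + 2 * δ ≤ 1 := by
    rw [mem_Ioo, lt_min_iff] at hδ
    exact ⟨hδ.1, by linarith, by linarith⟩
  have hP : Periodic π 1 := hper
  have hπ : EqOn π (piDelta b δ) (Icc 0 1) := fun r hr => hdef r hr.1 hr.2
  have hfract : ∀ x, π x = piDelta b δ (Int.fract x) :=
    hP.apply_eq_apply_fract_of_eqOn_Ico (hπ.mono Ico_subset_Icc_self)
  have hlip : LipschitzWith (Real.toNNReal (2 * δ)⁻¹) π :=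
    hP.lipschitzWith_of_lipschitzOnWith_Icc one_pos fun u hu v hv => by
      rw [hπ hu, hπ hv]
      exact lipschitzWith_piDelta hδ0 hδb hbδ u v
  have hK : (Real.toNNReal (2 * δ)⁻¹ : ℝ) = (2 * δ)⁻¹ := Real.coe_toNNReal _ (by positivity)
  intro x y
  rcases half_le_piDelta_fract_or_eq_mul_abs hδ0 hδb hbδ y with hy | ⟨t, n, rfl, hy⟩
  · rcases half_le_piDelta_fract_or_eq_mul_abs hδ0 hδb hbδ x with hx | ⟨t, n, rfl, hx⟩
    · rw [hfract (x + y), hfract x, hfract y]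
      linarith [piDelta_le_one (b := b) hδ0 (Int.fract (x + y))]
    · rw [add_comm _ y, add_comm (π _), hfract (t + n), hx, ← hK]
      exact hP.map_add_add_intCast_le hlip y t n
  · rw [hfract (t + n), hy, ← hK]
    exact hP.map_add_add_intCast_le hlip x t n

theorem stmt_7 (b δ : ℝ) (hb : b ∈ Set.Ioo (0:ℝ) 1)
    (hδ : δ ∈ Set.Ioo (0:ℝ) (min (b / 2) ((1 - b) / 2)))
    (π : ℝ → ℝ)
    (hper : ∀ x : ℝ, π (x + 1) = π x)
    (hdef : ∀ r : ℝ, 0 ≤ r → r ≤ 1 →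
      π r = if r ≤ δ then r / (2 * δ)
        else if r ≤ b - δ then 1 / 2
        else if r ≤ b then 1 - (b - r) / (2 * δ)
        else if r ≤ b + δ then 1 + (b - r) / (2 * δ)
        else if r ≤ 1 - δ then 1 / 2
        else 1 / 2 + (1 - δ - r) / (2 * δ)) :
    ∀ x y : ℝ, π (x + y) ≤ π x + π y :=
  stmt_7_general b δ hδ π hper hdef
end

section
/- Let d > 0 be rational, α ≥ 0, b ≤ 0 with 1 - αb > 0, and let π̃ : ℝ → ℝ be subadditive with π̃(0) = 0 and satisfying π̃(r) + π̃(b/d - r) = 1 for all r. Define π'(r) = (1 - αb)·π̃(r/d) + α·r. Then π' is subadditive, π'(0) = 0, and π'(r) + π'(b - r) = 1 for all r ∈ ℝ. -/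
section Rescale

variable {f g : ℝ → ℝ} {c d α : ℝ} (hg : ∀ r, g r = c * f (r / d) + α * r)
include hg

theorem subadditive_of_eq_smul_comp_div_add_linear (hf : ∀ x y, f (x + y) ≤ f x + f y)
    (hc : 0 ≤ c) (x y : ℝ) : g (x + y) ≤ g x + g y := by
  rw [hg, hg, hg, add_div]
  linarith [mul_le_mul_of_nonneg_left (hf (x / d) (y / d)) hc]

theorem eq_zero_of_eq_smul_comp_div_add_linear (hf : f 0 = 0) : g 0 = 0 := by
  simp [hg, hf]

theorem add_sub_eq_of_eq_smul_comp_div_add_linear {b : ℝ} (hf : ∀ r, f r + f (b / d - r) = 1)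
    (r : ℝ) : g r + g (b - r) = c + α * b := by
  rw [hg, hg, sub_div]
  linear_combination c * hf (r / d)

end Rescale

theorem stmt_17_general (d : ℝ)
    (α b : ℝ) (h1 : 0 < 1 - α * b)
    (πt : ℝ → ℝ)
    (hsub : ∀ x y, πt (x + y) ≤ πt x + πt y)
    (h0 : πt 0 = 0)
    (hsym : ∀ r, πt r + πt (b / d - r) = 1)
    (π' : ℝ → ℝ) (hπ' : ∀ r, π' r = (1 - α * b) * πt (r / d) + α * r) :
    (∀ x y, π' (x + y) ≤ π' x + π' y) ∧ π' 0 = 0 ∧ ∀ r, π' r + π' (b - r) = 1 :=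
  ⟨subadditive_of_eq_smul_comp_div_add_linear hπ' hsub h1.le,
    eq_zero_of_eq_smul_comp_div_add_linear hπ' h0,
    fun r => by rw [add_sub_eq_of_eq_smul_comp_div_add_linear hπ' hsym r, sub_add_cancel]⟩

theorem stmt_17 (d : ℝ) (hd : 0 < d) (hdrat : ∃ q : ℚ, d = (q : ℝ))
    (α b : ℝ) (hα : 0 ≤ α) (hb : b ≤ 0) (h1 : 0 < 1 - α * b)
    (πt : ℝ → ℝ)
    (hsub : ∀ x y, πt (x + y) ≤ πt x + πt y)
    (h0 : πt 0 = 0)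
    (hsym : ∀ r, πt r + πt (b / d - r) = 1)
    (π' : ℝ → ℝ) (hπ' : ∀ r, π' r = (1 - α * b) * πt (r / d) + α * r) :
    (∀ x y, π' (x + y) ≤ π' x + π' y) ∧ π' 0 = 0 ∧ ∀ r, π' r + π' (b - r) = 1 :=
  stmt_17_general d α b h1 πt hsub h0 hsym π' hπ'
end

section
/- Let b ≤ 0, β > 0, and π' : ℝ → ℝ be subadditive with π'(0) = 0 and π'(r) + π'(b - r) = 1 for all r, and suppose β = 1 + π'(-1)·b. Define π*(r) = (1/β)·(π'(r) + π'(-1)·r). Then π*(0) = 0, π*(-1) = 0, π* is subadditive, and π*(r) + π*(b - r) = 1 for all r ∈ ℝ. -/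
/-!
Subadditivity survives adding a linear function and multiplying by a positive constant, so
`π*` is subadditive. Adding `r ↦ π'(-1) r` turns the symmetry constant `1` into
`1 + π'(-1) b = β`, which the factor `1 / β` normalises back to `1`.
-/

def IsSubadditive {α M : Type*} [Add α] [Add M] [LE M] (f : α → M) : Prop :=
  ∀ x y, f (x + y) ≤ f x + f y

section OrderedRing

variable {R : Type*} [CommRing R] [PartialOrder R] [IsOrderedRing R] {f : R → R}

theorem IsSubadditive.add_mul_id (hf : IsSubadditive f) (k : R) :
    IsSubadditive fun x => f x + k * x := by
  intro x y
  linear_combination hf x y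

theorem IsSubadditive.const_mul (hf : IsSubadditive f) {c : R} (hc : 0 ≤ c) :
    IsSubadditive fun x => c * f x := by
  intro x y
  linear_combination mul_le_mul_of_nonneg_left (hf x y) hc

end OrderedRing

theorem stmt_18_general (b β : ℝ) (hβ : 0 < β)
    (π' : ℝ → ℝ)
    (hsub : ∀ x y, π' (x + y) ≤ π' x + π' y)
    (h0 : π' 0 = 0)
    (hsym : ∀ r, π' r + π' (b - r) = 1)
    (hβdef : β = 1 + π' (-1) * b)
    (πs : ℝ → ℝ) (hπs : ∀ r, πs r = (1 / β) * (π' r + π' (-1) * r)) :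
    πs 0 = 0 ∧ πs (-1) = 0 ∧ (∀ x y, πs (x + y) ≤ πs x + πs y) ∧
      ∀ r, πs r + πs (b - r) = 1 := by
  obtain rfl : πs = fun r => (1 / β) * (π' r + π' (-1) * r) := funext hπs
  refine ⟨by simp [h0], by simp, ?_, fun r => ?_⟩
  · exact (IsSubadditive.add_mul_id hsub (π' (-1))).const_mul (c := 1 / β) (by positivity)
  · have hβ' : β ≠ 0 := hβ.ne'
    field_simp
    linear_combination hsym r - hβdef

theorem stmt_18 (b β : ℝ) (hb : b ≤ 0) (hβ : 0 < β)
    (π' : ℝ → ℝ)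
    (hsub : ∀ x y, π' (x + y) ≤ π' x + π' y)
    (h0 : π' 0 = 0)
    (hsym : ∀ r, π' r + π' (b - r) = 1)
    (hβdef : β = 1 + π' (-1) * b)
    (πs : ℝ → ℝ) (hπs : ∀ r, πs r = (1 / β) * (π' r + π' (-1) * r)) :
    πs 0 = 0 ∧ πs (-1) = 0 ∧ (∀ x y, πs (x + y) ≤ πs x + πs y) ∧
      ∀ r, πs r + πs (b - r) = 1 :=
  stmt_18_general b β hβ π' hsub h0 hsym hβdef πs hπs
end
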